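/- Let X be a K-convex Banach space and f ∈ C¹(ℝ;X) with both f and f' in γ(ℝ;X). Then for every t ∈ ℝ, the sequence (f(n+t))_{n∈ℤ} satisfies ‖(f(n+t))_{n∈ℤ}‖_{ε(ℤ;X)} ≲ ‖f‖_{γ(ℝ;X)} + ‖f'‖_{γ(ℝ;X)}. -/

import Mathlib

set_option autoImplicit false

open MeasureTheory ProbabilityTheory ENNReal Set Filter

noncomputable section

universe u v w

/-- Finite Rademacher average: the mean over all sign choices of the norm of the signed sum. -/
def radAvgF {ι X : Type*} [Fintype ι] [DecidableEq ι] [NormedAddCommGroup X]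
    (x : ι → X) : ℝ :=
  (∑ ε : ι → Bool, ‖∑ n, (if ε n then x n else -x n)‖) / 2 ^ (Fintype.card ι)

/-- Rademacher norm of a family: supremum of the finite Rademacher averages over
finite subfamilies. -/
def radNorm {ι X : Type*} [DecidableEq ι] [NormedAddCommGroup X] (x : ι → X) : ℝ≥0∞ :=
  ⨆ s : Finset ι, ENNReal.ofReal (radAvgF (fun n : {a // a ∈ s} => x n.1))

/-- Product of standard Gaussian measures on `Fin N → ℝ`. -/
def gaussPi (N : ℕ) : Measure (Fin N → ℝ) := Measure.pi fun _ => gaussianReal 0 1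

/-- The γ-(summing) norm of the Pettis integral operator associated with `f : S → X`:
the supremum, over finite orthonormal systems `g` in `L²(μ)`, of the square root of the
second Gaussian moment of `∑ γₙ • ∫ gₙ f dμ`. -/
def gammaNorm {S X : Type*} [MeasurableSpace S] [NormedAddCommGroup X] [NormedSpace ℝ X]
    (μ : Measure S) (f : S → X) : ℝ≥0∞ :=
  ⨆ (N : ℕ) (g : Fin N → S → ℝ)
      (_ : ∀ n m : Fin N, (∫ s, g n s * g m s ∂μ) = if n = m then 1 else 0),
    ENNReal.ofReal (Real.sqrt (∫ ω, ‖∑ n, ω n • (∫ s, g n s • f s ∂μ)‖ ^ 2 ∂(gaussPi N)))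

/-- `f` belongs to `γ(S;X)`: the Pettis integral operator of `f` is approximable in the
γ-norm by finite-rank kernel operators with `L²` kernels. -/
def MemGamma {S X : Type*} [MeasurableSpace S] [NormedAddCommGroup X] [NormedSpace ℝ X]
    (μ : Measure S) (f : S → X) : Prop :=
  ∀ ε : ℝ≥0∞, 0 < ε → ∃ (N : ℕ) (g : Fin N → S → ℝ) (x : Fin N → X),
    (∀ n, MemLp (g n) 2 μ) ∧
    gammaNorm μ (fun s => f s - ∑ n, g n s • x n) ≤ ε

/-- A Banach space is K-convex: Rademacher averages are computed, up to a constant,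
by duality against Rademacher-normalized sequences of functionals. -/
def KConvex (X : Type*) [NormedAddCommGroup X] [NormedSpace ℝ X] : Prop :=
  ∃ C : ℝ, 0 < C ∧ ∀ (N : ℕ) (x : Fin N → X) (r : ℝ),
    (∀ φ : Fin N → (X →L[ℝ] ℝ), radAvgF φ ≤ 1 → |∑ n, φ n (x n)| ≤ r) →
    radAvgF x ≤ C * r

/-! Rademacher averages are dominated by Gaussian ones: averaging
`E|γ| ‖∑ εₙ xₙ‖ ≤ E‖∑ εₙ |γₙ| xₙ‖` over the signs `ε` and using the symmetry of the Gaussian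
measure gives `E|γ| · E‖∑ εₙ xₙ‖ ≤ E‖∑ γₙ xₙ‖`. Integrating by parts on `[a, a + 1]`,
`f a = ∫_a^{a+1} f - ∫_a^{a+1} (a + 1 - x) f'(x) dx`, so the values `f (n + t)` are combinations
of pairings of `f` and `f'` with the integer translates of two `L²`-normalised profiles supported
in `(0, 1]`. These translates are orthonormal, so the Gaussian sums of the pairings are bounded by
the γ-norms of `f` and `f'`, which are suprema over all orthonormal systems. -/

def gaussianAbsMoment : ℝ := ∫ x, |x| ∂gaussianReal 0 1

lemma gaussianAbsMoment_pos : 0 < gaussianAbsMoment := by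
  have : NullSingletonClass (gaussianReal 0 1) := nullSingletonClass_gaussianReal one_ne_zero
  have hsupp : Function.support (fun x : ℝ => |x|) = {0}ᶜ := by
    ext x; simp
  rw [gaussianAbsMoment, integral_pos_iff_support_of_nonneg (fun x => abs_nonneg x)
    ((memLp_id_gaussianReal 1).integrable le_rfl).abs, hsupp, prob_compl_eq_one_sub
    (measurableSet_singleton 0), measure_singleton]
  simp

instance (N : ℕ) : IsProbabilityMeasure (gaussPi N) := by
  rw [gaussPi]; infer_instance

lemma memLp_eval_gaussPi (N : ℕ) (i : Fin N) :
    MemLp (fun ω : Fin N → ℝ => ω i) 2 (gaussPi N) :=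
  (memLp_id_gaussianReal 2).comp_measurePreserving (measurePreserving_eval _ i)

lemma integrable_eval_gaussPi (N : ℕ) (i : Fin N) :
    Integrable (fun ω : Fin N → ℝ => ω i) (gaussPi N) :=
  (memLp_eval_gaussPi N i).integrable one_le_two

lemma integral_abs_eval_gaussPi (N : ℕ) (i : Fin N) :
    ∫ ω, |ω i| ∂gaussPi N = gaussianAbsMoment := by
  rw [gaussianAbsMoment, ← (measurePreserving_eval (fun _ : Fin N => gaussianReal 0 1) i).map_eq]
  exact (integral_map (measurable_pi_apply (X := fun _ : Fin N => ℝ) i).aemeasurable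
    continuous_abs.aestronglyMeasurable).symm

lemma measurePreserving_mul_gaussPi {N : ℕ} {σ : Fin N → ℝ} (hσ : ∀ i, |σ i| = 1) :
    MeasurePreserving (fun (ω : Fin N → ℝ) i => σ i * ω i) (gaussPi N) (gaussPi N) := by
  refine measurePreserving_pi _ _ fun i => ⟨measurable_const_mul _, ?_⟩
  have hσ2 : σ i ^ 2 = 1 := by rw [← sq_abs, hσ i, one_pow]
  rw [gaussianReal_map_const_mul, mul_zero]
  congr 1
  ext
  simp [hσ2]

lemma memLp_sum_smul_gaussPi {X : Type*} [NormedAddCommGroup X] [NormedSpace ℝ X] {N : ℕ}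
    (x : Fin N → X) : MemLp (fun ω : Fin N → ℝ => ∑ n, ω n • x n) 2 (gaussPi N) :=
  memLp_finsetSum _ fun n _ => (memLp_top_const (x n)).smul (memLp_eval_gaussPi N n)

lemma integral_le_sqrt_integral_sq {Ω : Type*} [MeasurableSpace Ω] {μ : Measure Ω}
    [IsProbabilityMeasure μ] {F : Ω → ℝ} (hF : MemLp F 2 μ) :
    ∫ ω, F ω ∂μ ≤ √(∫ ω, F ω ^ 2 ∂μ) := by
  refine Real.le_sqrt_of_sq_le ?_
  have := variance_nonneg F μ
  rw [variance_eq_sub hF] at this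
  simp only [Pi.pow_apply] at this
  linarith

def boolSign (b : Bool) : ℝ := if b then 1 else -1

lemma abs_boolSign (b : Bool) : |boolSign b| = 1 := by
  cases b <;> simp [boolSign]

section RadAvg

variable {ι X : Type*} [Fintype ι] [DecidableEq ι] [NormedAddCommGroup X]

lemma radAvgF_nonneg (x : ι → X) : 0 ≤ radAvgF x := by
  unfold radAvgF; positivity

variable [NormedSpace ℝ X]

lemma radAvgF_eq_sum_boolSign (x : ι → X) :
    radAvgF x = (∑ ε : ι → Bool, ‖∑ n, boolSign (ε n) • x n‖) / 2 ^ Fintype.card ι := by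
  have h (b : Bool) (v : X) : (if b then v else -v) = boolSign b • v := by
    cases b <;> simp [boolSign]
  simp only [radAvgF, h]

lemma radAvgF_add_le (x y : ι → X) :
    radAvgF (fun n => x n + y n) ≤ radAvgF x + radAvgF y := by
  simp only [radAvgF_eq_sum_boolSign, ← add_div, smul_add, Finset.sum_add_distrib]
  rw [← Finset.sum_add_distrib]
  gcongr
  exact norm_add_le _ _

lemma radAvgF_smul (c : ℝ) (x : ι → X) :
    radAvgF (fun n => c • x n) = |c| * radAvgF x := by
  simp only [radAvgF_eq_sum_boolSign, mul_div_assoc', Finset.mul_sum, smul_comm _ c,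
    ← Finset.smul_sum, norm_smul, Real.norm_eq_abs]

lemma radAvgF_sub_smul_le (x y : ι → X) (c : ℝ) :
    radAvgF (fun n => x n - c • y n) ≤ radAvgF x + |c| * radAvgF y := by
  have h := radAvgF_add_le x fun n => (-c) • y n
  rw [radAvgF_smul, abs_neg] at h
  simpa only [neg_smul, ← sub_eq_add_neg] using h

lemma radAvgF_comp_equiv {κ : Type*} [Fintype κ] [DecidableEq κ] (e : κ ≃ ι) (x : ι → X) :
    radAvgF (fun n => x (e n)) = radAvgF x := by
  rw [radAvgF_eq_sum_boolSign, radAvgF_eq_sum_boolSign, Fintype.card_congr e]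
  congr 1
  refine Fintype.sum_equiv (e.arrowCongr (Equiv.refl Bool)) _ _ fun ε => ?_
  congr 1
  exact Fintype.sum_equiv e _ _ fun n => by simp

end RadAvg

section GaussianComparison

variable {X : Type*} [NormedAddCommGroup X] [NormedSpace ℝ X]

lemma sum_norm_sum_boolSign_mul_abs_smul {ι : Type*} [Fintype ι] [DecidableEq ι] (ω : ι → ℝ)
    (x : ι → X) :
    ∑ ε : ι → Bool, ‖∑ n, (boolSign (ε n) * |ω n|) • x n‖ =
      ∑ ε : ι → Bool, ‖∑ n, (boolSign (ε n) * ω n) • x n‖ := by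
  refine (Fintype.sum_bijective (fun ε n => ε n != decide (ω n < 0))
    (Function.Involutive.bijective fun ε => by funext n; simp) _ _ fun ε => ?_).symm
  have hsign (b : Bool) (w : ℝ) : boolSign (b != decide (w < 0)) * |w| = boolSign b * w := by
    rcases lt_or_ge w 0 with h | h <;> cases b
    all_goals simp [boolSign, h, h.not_gt, abs_of_neg, abs_of_nonneg]
  simp only [hsign]

lemma integral_norm_sum_mul_smul_gaussPi {N : ℕ} {σ : Fin N → ℝ} (hσ : ∀ i, |σ i| = 1)
    (x : Fin N → X) :
    ∫ ω, ‖∑ n, (σ n * ω n) • x n‖ ∂gaussPi N = ∫ ω, ‖∑ n, ω n • x n‖ ∂gaussPi N := by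
  have hσ' := measurePreserving_mul_gaussPi hσ
  conv_rhs => rw [← hσ'.map_eq]
  rw [integral_map hσ'.measurable.aemeasurable]
  rw [hσ'.map_eq]
  exact (memLp_sum_smul_gaussPi x).norm.aestronglyMeasurable

variable [CompleteSpace X]

lemma gaussianAbsMoment_mul_norm_le {N : ℕ} (σ : Fin N → ℝ) (x : Fin N → X) :
    gaussianAbsMoment * ‖∑ n, σ n • x n‖ ≤ ∫ ω, ‖∑ n, (σ n * |ω n|) • x n‖ ∂gaussPi N := by
  have hint (n : Fin N) : Integrable (fun ω : Fin N → ℝ => (σ n * |ω n|) • x n) (gaussPi N) :=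
    ((integrable_eval_gaussPi N n).abs.const_mul (σ n)).smul_const (x n)
  have hmean :
      ∫ ω, ∑ n, (σ n * |ω n|) • x n ∂gaussPi N = gaussianAbsMoment • ∑ n, σ n • x n := by
    rw [integral_finsetSum _ fun n _ => hint n, Finset.smul_sum]
    refine Finset.sum_congr rfl fun n _ => ?_
    rw [integral_smul_const, integral_const_mul, integral_abs_eval_gaussPi, smul_smul, mul_comm]
  calc gaussianAbsMoment * ‖∑ n, σ n • x n‖
      = ‖∫ ω, ∑ n, (σ n * |ω n|) • x n ∂gaussPi N‖ := by
        rw [hmean, norm_smul, Real.norm_of_nonneg gaussianAbsMoment_pos.le]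
    _ ≤ _ := norm_integral_le_integral_norm _

lemma gaussianAbsMoment_mul_radAvgF_le {N : ℕ} (x : Fin N → X) :
    gaussianAbsMoment * radAvgF x ≤ ∫ ω, ‖∑ n, ω n • x n‖ ∂gaussPi N := by
  have hint (σ : Fin N → ℝ) :
      Integrable (fun ω : Fin N → ℝ => ‖∑ n, (σ n * |ω n|) • x n‖) (gaussPi N) :=
    (integrable_finsetSum _ fun n _ =>
      ((integrable_eval_gaussPi N n).abs.const_mul (σ n)).smul_const (x n)).norm
  have hint' (σ : Fin N → ℝ) :
      Integrable (fun ω : Fin N → ℝ => ‖∑ n, (σ n * ω n) • x n‖) (gaussPi N) :=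
    (integrable_finsetSum _ fun n _ =>
      ((integrable_eval_gaussPi N n).const_mul (σ n)).smul_const (x n)).norm
  rw [radAvgF_eq_sum_boolSign, Fintype.card_fin, mul_div_assoc', div_le_iff₀ (by positivity),
    Finset.mul_sum]
  calc ∑ ε : Fin N → Bool, gaussianAbsMoment * ‖∑ n, boolSign (ε n) • x n‖
      ≤ ∑ ε : Fin N → Bool, ∫ ω, ‖∑ n, (boolSign (ε n) * |ω n|) • x n‖ ∂gaussPi N :=
        Finset.sum_le_sum fun ε _ => gaussianAbsMoment_mul_norm_le _ x
    _ = ∑ ε : Fin N → Bool, ∫ ω, ‖∑ n, (boolSign (ε n) * ω n) • x n‖ ∂gaussPi N := by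
        rw [← integral_finsetSum _ fun ε _ => hint _, ← integral_finsetSum _ fun ε _ => hint' _]
        simp only [sum_norm_sum_boolSign_mul_abs_smul]
    _ = ∑ ε : Fin N → Bool, ∫ ω, ‖∑ n, ω n • x n‖ ∂gaussPi N := by
        simp_rw [integral_norm_sum_mul_smul_gaussPi fun n => abs_boolSign _]
    _ = (∫ ω, ‖∑ n, ω n • x n‖ ∂gaussPi N) * 2 ^ N := by
        simp [mul_comm]

lemma radAvgF_le_gaussian {N : ℕ} (x : Fin N → X) :
    radAvgF x ≤ gaussianAbsMoment⁻¹ * √(∫ ω, ‖∑ n, ω n • x n‖ ^ 2 ∂gaussPi N) := by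
  rw [← div_eq_inv_mul, le_div_iff₀' gaussianAbsMoment_pos]
  exact (gaussianAbsMoment_mul_radAvgF_le x).trans
    (integral_le_sqrt_integral_sq (memLp_sum_smul_gaussPi x).norm)

end GaussianComparison

section GammaNorm

variable {S X : Type*} [MeasurableSpace S] [NormedAddCommGroup X] [NormedSpace ℝ X]

lemma le_gammaNorm (μ : Measure S) (f : S → X) {N : ℕ} (g : Fin N → S → ℝ)
    (hg : ∀ n m : Fin N, ∫ s, g n s * g m s ∂μ = if n = m then 1 else 0) :
    ENNReal.ofReal (√(∫ ω, ‖∑ n, ω n • ∫ s, g n s • f s ∂μ‖ ^ 2 ∂gaussPi N)) ≤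
      gammaNorm μ f :=
  le_iSup₂_of_le N g (le_iSup_of_le hg le_rfl)

lemma ofReal_radAvgF_le_gammaNorm [CompleteSpace X] {ι : Type*} [Fintype ι] [DecidableEq ι]
    (μ : Measure S) (f : S → X) (g : ι → S → ℝ)
    (hg : ∀ i j : ι, ∫ s, g i s * g j s ∂μ = if i = j then 1 else 0) :
    ENNReal.ofReal (radAvgF fun i => ∫ s, g i s • f s ∂μ) ≤
      ENNReal.ofReal gaussianAbsMoment⁻¹ * gammaNorm μ f := by
  let e := (Fintype.equivFin ι).symm
  rw [← radAvgF_comp_equiv e]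
  calc ENNReal.ofReal (radAvgF fun n => ∫ s, g (e n) s • f s ∂μ)
      ≤ ENNReal.ofReal (gaussianAbsMoment⁻¹ *
          √(∫ ω, ‖∑ n, ω n • ∫ s, g (e n) s • f s ∂μ‖ ^ 2 ∂gaussPi _)) :=
        ENNReal.ofReal_le_ofReal (radAvgF_le_gaussian _)
    _ ≤ _ := by
        rw [ENNReal.ofReal_mul (inv_nonneg.2 gaussianAbsMoment_pos.le)]
        gcongr
        exact le_gammaNorm μ f (fun n => g (e n)) fun n m => by simpa using hg (e n) (e m)

end GammaNorm

section Translates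

variable {X : Type*} [NormedAddCommGroup X] [NormedSpace ℝ X]

lemma integral_comp_sub_mul_comp_sub {ι : Type*} [DecidableEq ι] {ρ : ℝ → ℝ}
    (hρ : Function.support ρ ⊆ Ioc 0 1) (hρ1 : ∫ x, ρ x * ρ x = 1) {a : ι → ℝ}
    (ha : Pairwise fun i j => 1 ≤ |a i - a j|) (i j : ι) :
    ∫ s, ρ (s - a i) * ρ (s - a j) = if i = j then 1 else 0 := by
  split_ifs with hij
  · rw [hij, integral_sub_right_eq_self (fun s => ρ s * ρ s), hρ1]
  · have hdisj (s : ℝ) : ρ (s - a i) * ρ (s - a j) = 0 := by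
      by_contra hs
      obtain ⟨hi, hj⟩ := mul_ne_zero_iff.1 hs
      have hi' := hρ hi
      have hj' := hρ hj
      simp only [mem_Ioc] at hi' hj'
      rcases le_abs'.1 (ha hij) with h | h <;> linarith
    simp [hdisj]

lemma integral_comp_sub_smul_eq_intervalIntegral {ρ : ℝ → ℝ}
    (hρ : Function.support ρ ⊆ Ioc 0 1) (a : ℝ) (F : ℝ → X) :
    ∫ s, ρ (s - a) • F s = ∫ s in a..a + 1, ρ (s - a) • F s := by
  rw [intervalIntegral.integral_of_le (by linarith), ← integral_indicator measurableSet_Ioc]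
  congr 1
  funext s
  by_cases hs : s ∈ Ioc a (a + 1)
  · rw [indicator_of_mem hs]
  · have hρs : ρ (s - a) = 0 := by
      refine Function.notMem_support.1 fun h => hs ?_
      have := hρ h
      simp only [mem_Ioc] at this ⊢
      constructor <;> linarith
    rw [indicator_of_notMem hs, hρs, zero_smul]

variable [CompleteSpace X]

lemma smul_eq_intervalIntegral_sub_intervalIntegral_smul_deriv {f f' : ℝ → X} {a b : ℝ}
    (hf : ∀ x ∈ uIcc a b, HasDerivAt f (f' x) x) (hf' : ContinuousOn f' (uIcc a b)) :
    (b - a) • f a = (∫ x in a..b, f x) - ∫ x in a..b, (b - x) • f' x := by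
  have hd : ∀ x ∈ uIcc a b,
      HasDerivAt (fun y => (b - y) • f y) ((b - x) • f' x - f x) x := fun x hx =>
    (((hasDerivAt_id x).const_sub b).smul (hf x hx)).congr_deriv
      (by rw [id_eq, neg_one_smul, ← sub_eq_add_neg])
  have hfi : IntervalIntegrable f volume a b := (HasDerivAt.continuousOn hf).intervalIntegrable
  have hf'i : IntervalIntegrable (fun x => (b - x) • f' x) volume a b :=
    ((continuous_const.sub continuous_id).continuousOn.smul hf').intervalIntegrable
  have := intervalIntegral.integral_eq_sub_of_hasDerivAt hd (hf'i.sub hfi)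
  rw [intervalIntegral.integral_sub hf'i hfi, sub_self, zero_smul, zero_sub] at this
  rw [← neg_neg ((b - a) • f a), ← this, neg_sub]

end Translates

def boxProfile : ℝ → ℝ := (Ioc (0 : ℝ) 1).indicator 1

def rampProfile : ℝ → ℝ := (Ioc (0 : ℝ) 1).indicator fun x => √3 * (1 - x)

lemma support_boxProfile_subset : Function.support boxProfile ⊆ Ioc 0 1 :=
  support_indicator_subset

lemma support_rampProfile_subset : Function.support rampProfile ⊆ Ioc 0 1 :=
  support_indicator_subset

lemma integral_boxProfile_mul_self : ∫ x, boxProfile x * boxProfile x = 1 := by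
  simp [boxProfile, ← indicator_mul, integral_indicator measurableSet_Ioc]

lemma integral_rampProfile_mul_self : ∫ x, rampProfile x * rampProfile x = 1 := by
  rw [rampProfile, ← indicator_mul, integral_indicator measurableSet_Ioc,
    ← intervalIntegral.integral_of_le zero_le_one]
  have h3 : √3 * √3 = 3 := Real.mul_self_sqrt (by norm_num)
  have hsq (x : ℝ) : √3 * (1 - x) * (√3 * (1 - x)) = 3 * (1 - x) ^ 2 := by
    rw [mul_mul_mul_comm, h3, sq]
  simp only [hsq]
  norm_num [intervalIntegral.integral_comp_sub_left fun x => x ^ 2]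

lemma eq_integral_boxProfile_sub_integral_rampProfile {X : Type*} [NormedAddCommGroup X]
    [NormedSpace ℝ X] [CompleteSpace X] {f f' : ℝ → X} (hf : ∀ x, HasDerivAt f (f' x) x)
    (hf' : Continuous f') (a : ℝ) :
    f a = (∫ s, boxProfile (s - a) • f s) - (√3)⁻¹ • ∫ s, rampProfile (s - a) • f' s := by
  have hIoc {x : ℝ} (hx : x ∈ uIoc a (a + 1)) : x - a ∈ Ioc 0 1 := by
    rw [uIoc_of_le (by linarith), mem_Ioc] at hx
    constructor <;> linarith [hx.1, hx.2]
  have hftc := smul_eq_intervalIntegral_sub_intervalIntegral_smul_deriv (a := a) (b := a + 1)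
    (fun x _ => hf x) hf'.continuousOn
  rw [add_sub_cancel_left, one_smul] at hftc
  rw [integral_comp_sub_smul_eq_intervalIntegral support_boxProfile_subset,
    integral_comp_sub_smul_eq_intervalIntegral support_rampProfile_subset,
    ← intervalIntegral.integral_smul, hftc]
  congr 1 <;> refine intervalIntegral.integral_congr_ae (ae_of_all _ fun x hx => ?_)
  · rw [boxProfile, indicator_of_mem (hIoc hx), Pi.one_apply, one_smul]
  · rw [rampProfile, indicator_of_mem (hIoc hx), smul_smul, ← mul_assoc,
      inv_mul_cancel₀ (by positivity), one_mul]
    ring_nf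

theorem statement7_general {X : Type*} [NormedAddCommGroup X] [NormedSpace ℝ X] [CompleteSpace X] :
    ∃ c : ℝ≥0∞, c ≠ ⊤ ∧
      ∀ (f f' : ℝ → X),
        (∀ t : ℝ, HasDerivAt f (f' t) t) → Continuous f' →
        MemGamma volume f → MemGamma volume f' →
        ∀ t : ℝ,
          radNorm (fun n : ℤ => f ((n : ℝ) + t)) ≤
            c * (gammaNorm volume f + gammaNorm volume f') := by
  refine ⟨ENNReal.ofReal gaussianAbsMoment⁻¹, ENNReal.ofReal_ne_top, ?_⟩
  intro f f' hf hf' _ _ t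
  refine iSup_le fun s => ?_
  let a : s → ℝ := fun n => ((n : ℤ) : ℝ) + t
  have ha : Pairwise fun i j => 1 ≤ |a i - a j| := fun i j hij => by
    have : ((i : ℤ) : ℝ) + t - ((j : ℤ) + t) = ((i - j : ℤ) : ℝ) := by push_cast; ring
    simp only [a, this, ← Int.cast_abs]
    exact_mod_cast Int.one_le_abs (sub_ne_zero.2 (Subtype.coe_injective.ne hij))
  have hv := ofReal_radAvgF_le_gammaNorm volume f _
    (integral_comp_sub_mul_comp_sub support_boxProfile_subset integral_boxProfile_mul_self ha)
  have hu := ofReal_radAvgF_le_gammaNorm volume f' _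
    (integral_comp_sub_mul_comp_sub support_rampProfile_subset integral_rampProfile_mul_self ha)
  have hsqrt3 : |(√3)⁻¹| ≤ 1 := by
    rw [abs_inv, abs_of_nonneg (Real.sqrt_nonneg 3)]
    exact inv_le_one_of_one_le₀ (Real.one_le_sqrt.2 (by norm_num))
  calc ENNReal.ofReal (radAvgF fun n : s => f (a n))
      ≤ ENNReal.ofReal ((radAvgF fun n : s => ∫ x, boxProfile (x - a n) • f x) +
          radAvgF fun n : s => ∫ x, rampProfile (x - a n) • f' x) := by
        simp only [eq_integral_boxProfile_sub_integral_rampProfile hf hf' (a _)]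
        gcongr
        exact (radAvgF_sub_smul_le _ _ _).trans
          (by gcongr; exact mul_le_of_le_one_left (radAvgF_nonneg _) hsqrt3)
    _ ≤ _ := ENNReal.ofReal_add_le.trans ((add_le_add hv hu).trans_eq (mul_add _ _ _).symm)

/-- For a K-convex space `X` and `f ∈ C¹(ℝ;X)` with `f, f' ∈ γ(ℝ;X)`,
for every `t ∈ ℝ`: `‖(f(n+t))_{n∈ℤ}‖_{ε(ℤ;X)} ≲ ‖f‖_{γ(ℝ;X)} + ‖f'‖_{γ(ℝ;X)}`. -/
theorem statement7 {X : Type*} [NormedAddCommGroup X] [NormedSpace ℝ X] [CompleteSpace X]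
    (hK : KConvex X) :
    ∃ c : ℝ≥0∞, c ≠ ⊤ ∧
      ∀ (f f' : ℝ → X),
        (∀ t : ℝ, HasDerivAt f (f' t) t) → Continuous f' →
        MemGamma volume f → MemGamma volume f' →
        ∀ t : ℝ,
          radNorm (fun n : ℤ => f ((n : ℝ) + t)) ≤
            c * (gammaNorm volume f + gammaNorm volume f') :=
  statement7_general
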